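/- Sphere case. Assume c² < −4(b k + k²). For every r₀ > 0 and W₀, V₀ ∈ ℝ³ with |W₀| = 1 and W₀·V₀ = 0, there exists a similarity spherical profile W : [r₀,∞) → ℝ³ defined on all of [r₀,∞) with W(r₀) = W₀ and W′(r₀) = V₀. Moreover every similarity spherical profile W defined on [r₀,∞) satisfies: the limit lim_{r→∞} [ (1/2)|W′(r)|² − μ (1 − W(r)·e₀) ] exists, and ∫_{r₀}^∞ |W′(r)|²/r dr < ∞. -/

import Mathlib

open Set Filter Topology NNReal Metric

/-- Euclidean dot product on `ℝ³`. -/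
noncomputable def dot3 (v w : Fin 3 → ℝ) : ℝ := v 0 * w 0 + v 1 * w 1 + v 2 * w 2

/-- Cross product on `ℝ³`. -/
noncomputable def cross3 (v w : Fin 3 → ℝ) : Fin 3 → ℝ :=
  ![v 1 * w 2 - v 2 * w 1, v 2 * w 0 - v 0 * w 2, v 0 * w 1 - v 1 * w 0]

/-- The north pole `e₀ = (1,0,0)`. -/
noncomputable def e0 : Fin 3 → ℝ := ![1, 0, 0]

/-- `g(w) = (k²/2)(1 − w²) + bk(1 − w) − k²(1 − w)²`. -/
noncomputable def gfun (k b : ℝ) (w : ℝ) : ℝ :=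
  k ^ 2 / 2 * (1 - w ^ 2) + b * k * (1 - w) - k ^ 2 * (1 - w) ^ 2

/-- A similarity spherical profile on `J ⊆ (0,∞)`: a twice differentiable
`W : J → S² ⊂ ℝ³` solving the reduced similarity equation (5.5). -/
def IsSimProfile (k b c μ : ℝ) (J : Set ℝ) (W : ℝ → Fin 3 → ℝ) : Prop :=
  J ⊆ Ioi (0:ℝ) ∧
  (∀ r ∈ J, DifferentiableAt ℝ W r ∧ DifferentiableAt ℝ (deriv W) r) ∧
  (∀ r ∈ J, dot3 (W r) (W r) = 1) ∧
  (∀ r ∈ J,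
    deriv (deriv W) r + dot3 (deriv W r) (deriv W r) • W r + (1 / r) • deriv W r
      + (deriv (gfun k b) (dot3 (W r) e0) / r ^ 2) • (e0 - dot3 (W r) e0 • W r)
      + μ • (e0 - dot3 (W r) e0 • W r)
      + (c / r - r / 2) • cross3 (W r) (deriv W r) = 0)

noncomputable def gder (k b w : ℝ) : ℝ :=
  k ^ 2 / 2 * (-(2*w)) + b * k * (-1) - k ^ 2 * (2 * (1 - w) * (-1))
lemma hasDerivAt_gfun (k b w : ℝ) : HasDerivAt (gfun k b) (gder k b w) w := by
  unfold gfun gder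
  have h1 : HasDerivAt (fun w : ℝ => w) 1 w := hasDerivAt_id w
  have h2 : HasDerivAt (fun w : ℝ => 1 - w ^ 2) (-(2*w)) w := by
    simpa using (h1.pow 2).const_sub 1
  have h3 : HasDerivAt (fun w : ℝ => 1 - w) (-1) w := by
    simpa using h1.const_sub 1
  have h4 : HasDerivAt (fun w : ℝ => (1 - w) ^ 2) (2 * (1-w) * (-1)) w := by
    simpa using h3.fun_pow 2
  exact ((h2.const_mul (k^2/2)).add (h3.const_mul (b*k))).sub (h4.const_mul (k^2))
lemma deriv_gfun (k b w : ℝ) : deriv (gfun k b) w = gder k b w := (hasDerivAt_gfun k b w).deriv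
lemma dot3_e0 (v : Fin 3 → ℝ) : dot3 v e0 = v 0 := by simp [dot3, e0]

abbrev E3 := Fin 3 → ℝ

/-- the first-order vector field for the similarity ODE. -/
noncomputable def pvec (k b c μ : ℝ) (t : ℝ) (x : E3 × E3) : E3 × E3 :=
  (x.2,
   -(dot3 x.2 x.2 • x.1 + (1 / t) • x.2
     + (deriv (gfun k b) (dot3 x.1 e0) / t ^ 2) • (e0 - dot3 x.1 e0 • x.1)
     + μ • (e0 - dot3 x.1 e0 • x.1)
     + (c / t - t / 2) • cross3 x.1 x.2))

lemma pvec_eq (k b c μ t : ℝ) (x : E3 × E3) :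
    pvec k b c μ t x
      = (x.2,
        -(dot3 x.2 x.2 • x.1 + (1 / t) • x.2
          + (gder k b (x.1 0) / t ^ 2) • (e0 - x.1 0 • x.1)
          + μ • (e0 - x.1 0 • x.1)
          + (c / t - t / 2) • cross3 x.1 x.2)) := by
  rw [pvec, deriv_gfun, dot3_e0]

lemma contDiffOn_pvec (k b c μ : ℝ) :
    ContDiffOn ℝ 1 (fun q : ℝ × (E3 × E3) => pvec k b c μ q.1 q.2)
      {q : ℝ × (E3 × E3) | q.1 ≠ 0} := by
  have hfuneq : (fun q : ℝ × (E3 × E3) => pvec k b c μ q.1 q.2)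
      = fun q : ℝ × (E3 × E3) =>
        (q.2.2,
        -(dot3 q.2.2 q.2.2 • q.2.1 + (1 / q.1) • q.2.2
          + (gder k b (q.2.1 0) / q.1 ^ 2) • (e0 - q.2.1 0 • q.2.1)
          + μ • (e0 - q.2.1 0 • q.2.1)
          + (c / q.1 - q.1 / 2) • cross3 q.2.1 q.2.2)) := by
    funext q; rw [pvec_eq]
  rw [hfuneq]
  set S : Set (ℝ × (E3 × E3)) := {q : ℝ × (E3 × E3) | q.1 ≠ 0} with hS
  have hw : ContDiff ℝ 1 (fun q : ℝ × (E3 × E3) => q.2.1) := contDiff_snd.fst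
  have hv : ContDiff ℝ 1 (fun q : ℝ × (E3 × E3) => q.2.2) := contDiff_snd.snd
  have hwi : ∀ i, ContDiff ℝ 1 (fun q : ℝ × (E3 × E3) => q.2.1 i) := fun i =>
    (ContinuousLinearMap.proj (R := ℝ) (φ := fun _ : Fin 3 => ℝ) i).contDiff.comp hw
  have hvi : ∀ i, ContDiff ℝ 1 (fun q : ℝ × (E3 × E3) => q.2.2 i) := fun i =>
    (ContinuousLinearMap.proj (R := ℝ) (φ := fun _ : Fin 3 => ℝ) i).contDiff.comp hv
  have hq22 : ContDiff ℝ 1 (fun q : ℝ × (E3 × E3) => dot3 q.2.2 q.2.2) := by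
    unfold dot3
    exact (((hvi 0).mul (hvi 0)).add ((hvi 1).mul (hvi 1))).add ((hvi 2).mul (hvi 2))
  have hgd : ContDiff ℝ 1 (fun q : ℝ × (E3 × E3) => gder k b (q.2.1 0)) := by
    unfold gder
    have := hwi 0
    fun_prop
  have hcross : ContDiff ℝ 1 (fun q : ℝ × (E3 × E3) => cross3 q.2.1 q.2.2) := by
    apply contDiff_pi.2
    intro i
    fin_cases i <;> simp [cross3] <;>
      exact ((hwi _).mul (hvi _)).sub ((hwi _).mul (hvi _))
  have hP : ContDiff ℝ 1 (fun q : ℝ × (E3 × E3) => e0 - q.2.1 0 • q.2.1) :=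
    contDiff_const.sub ((hwi 0).smul hw)
  have ht0 : ∀ q ∈ S, q.1 ≠ 0 := fun q hq => hq
  have hinv : ContDiffOn ℝ 1 (fun q : ℝ × (E3 × E3) => 1 / q.1) S :=
    contDiffOn_const.div contDiff_fst.contDiffOn ht0
  have hdiv2 : ContDiffOn ℝ 1 (fun q : ℝ × (E3 × E3) => gder k b (q.2.1 0) / q.1 ^ 2) S :=
    hgd.contDiffOn.div ((contDiff_fst.pow 2).contDiffOn)
      (fun q hq => pow_ne_zero 2 (ht0 q hq))
  have hsc : ContDiffOn ℝ 1 (fun q : ℝ × (E3 × E3) => c / q.1 - q.1 / 2) S :=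
    (contDiffOn_const.div contDiff_fst.contDiffOn ht0).sub
      (contDiff_fst.contDiffOn.div_const 2)
  apply ContDiffOn.prodMk hv.contDiffOn
  apply ContDiffOn.neg
  exact (((((hq22.smul hw).contDiffOn.add (hinv.smul hv.contDiffOn)).add
    (hdiv2.smul hP.contDiffOn)).add (((contDiff_const (c := μ)).smul hP).contDiffOn)).add
    (hsc.smul hcross.contDiffOn))

lemma exists_K_C (k b c μ a T M : ℝ) (ha : 0 < a) :
    ∃ K : ℝ≥0, ∃ C : ℝ, 0 ≤ C ∧
      (∀ t ∈ Icc a T, LipschitzOnWith K (pvec k b c μ t) (closedBall 0 M)) ∧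
      (∀ t ∈ Icc a T, ∀ x ∈ closedBall (0 : E3 × E3) M, ‖pvec k b c μ t x‖ ≤ C) := by
  set G : ℝ × (E3 × E3) → E3 × E3 := fun q => pvec k b c μ q.1 q.2 with hG
  set S : Set (ℝ × (E3 × E3)) := {q : ℝ × (E3 × E3) | q.1 ≠ 0} with hSdef
  have hSopen : IsOpen S := isOpen_compl_singleton.preimage continuous_fst
  set Q : Set (ℝ × (E3 × E3)) := Icc a T ×ˢ closedBall 0 M with hQdef
  have hQS : Q ⊆ S := by
    rintro ⟨t, x⟩ ⟨ht, _⟩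
    exact ne_of_gt (lt_of_lt_of_le ha ht.1)
  have hQcomp : IsCompact Q := isCompact_Icc.prod (isCompact_closedBall 0 M)
  have hQconv : Convex ℝ Q := (convex_Icc a T).prod (convex_closedBall 0 M)
  have hCD := contDiffOn_pvec k b c μ
  have hder : ∀ p ∈ Q, HasFDerivWithinAt G (fderiv ℝ G p) Q p := fun p hp =>
    (((hCD.differentiableOn one_ne_zero) p (hQS hp)).differentiableAt
      (hSopen.mem_nhds (hQS hp))).hasFDerivAt.hasFDerivWithinAt
  have hfc : ContinuousOn (fun p => fderiv ℝ G p) S :=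
    hCD.continuousOn_fderiv_of_isOpen hSopen le_rfl
  obtain ⟨M₂, hM₂⟩ := hQcomp.exists_bound_of_continuousOn (hfc.mono hQS)
  have hnn : ∀ p ∈ Q, ‖fderiv ℝ G p‖₊ ≤ M₂.toNNReal := by
    intro p hp
    rw [← NNReal.coe_le_coe, coe_nnnorm, Real.coe_toNNReal']
    exact le_max_of_le_left (hM₂ p hp)
  have hlip : LipschitzOnWith M₂.toNNReal G Q :=
    hQconv.lipschitzOnWith_of_nnnorm_hasFDerivWithin_le hder hnn
  obtain ⟨C₁, hC₁⟩ := hQcomp.exists_bound_of_continuousOn (hCD.continuousOn.mono hQS)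
  refine ⟨M₂.toNNReal, max C₁ 0, le_max_right _ _, ?_, ?_⟩
  · intro t ht
    intro x hx y hy
    have h := hlip (show (t,x) ∈ Q from ⟨ht, hx⟩) (show (t,y) ∈ Q from ⟨ht, hy⟩)
    have he : edist ((t,x) : ℝ × (E3 × E3)) (t,y) = edist x y := by
      rw [Prod.edist_eq, edist_self, max_eq_right zero_le]
    rw [he] at h
    exact h
  · intro t ht x hx
    exact le_max_of_le_left (hC₁ (t,x) ⟨ht, hx⟩)

/-! chunk 2 : pair solutions and invariants -/

lemma dot3_zero' (v : Fin 3 → ℝ) : dot3 v 0 = 0 := by simp [dot3]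
lemma dot3_neg (u v : Fin 3 → ℝ) : dot3 u (-v) = -dot3 u v := by
  simp [dot3]; ring
lemma dot3_add' (u v w : Fin 3 → ℝ) : dot3 u (v + w) = dot3 u v + dot3 u w := by
  simp [dot3]; ring
lemma dot3_sub' (u v w : Fin 3 → ℝ) : dot3 u (v - w) = dot3 u v - dot3 u w := by
  simp [dot3]; ring
lemma dot3_smul' (a : ℝ) (u v : Fin 3 → ℝ) : dot3 u (a • v) = a * dot3 u v := by
  simp [dot3]; ring
lemma dot3_cross₂ (v w : Fin 3 → ℝ) : dot3 w (cross3 v w) = 0 := by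
  simp [dot3, cross3]; ring
lemma dot3_cross₁ (v w : Fin 3 → ℝ) : dot3 v (cross3 v w) = 0 := by
  simp [dot3, cross3]; ring
lemma dot3_comm' (v w : Fin 3 → ℝ) : dot3 v w = dot3 w v := by simp [dot3]; ring
lemma dot3_self_nonneg' (v : Fin 3 → ℝ) : 0 ≤ dot3 v v := by
  simp only [dot3]; nlinarith [sq_nonneg (v 0), sq_nonneg (v 1), sq_nonneg (v 2)]

lemma hasDerivWithinAt_dot3 {f g : ℝ → Fin 3 → ℝ} {f' g' : Fin 3 → ℝ} {s : Set ℝ} {x : ℝ}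
    (hf : HasDerivWithinAt f f' s x) (hg : HasDerivWithinAt g g' s x) :
    HasDerivWithinAt (fun t => dot3 (f t) (g t)) (dot3 f' (g x) + dot3 (f x) g') s x := by
  have Hf := fun i => hasDerivWithinAt_pi.1 hf i
  have Hg := fun i => hasDerivWithinAt_pi.1 hg i
  have : HasDerivWithinAt (fun t => f t 0 * g t 0 + f t 1 * g t 1 + f t 2 * g t 2)
      ((f' 0 * g x 0 + f x 0 * g' 0) + (f' 1 * g x 1 + f x 1 * g' 1)
        + (f' 2 * g x 2 + f x 2 * g' 2)) s x :=
    (((Hf 0).mul (Hg 0)).add ((Hf 1).mul (Hg 1))).add ((Hf 2).mul (Hg 2))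
  refine this.congr_deriv ?_
  simp only [dot3]; ring

lemma hdw_fst {p : ℝ → E3 × E3} {P : E3 × E3} {s : Set ℝ} {x : ℝ}
    (h : HasDerivWithinAt p P s x) : HasDerivWithinAt (fun t => (p t).1) P.1 s x := by
  simpa using (h.hasFDerivWithinAt.fst).hasDerivWithinAt

lemma hdw_snd {p : ℝ → E3 × E3} {P : E3 × E3} {s : Set ℝ} {x : ℝ}
    (h : HasDerivWithinAt p P s x) : HasDerivWithinAt (fun t => (p t).2) P.2 s x := by
  simpa using (h.hasFDerivWithinAt.snd).hasDerivWithinAt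

lemma continuousOn_dot3_comp {f g : ℝ → E3} {s : Set ℝ}
    (hf : ContinuousOn f s) (hg : ContinuousOn g s) :
    ContinuousOn (fun t => dot3 (f t) (g t)) s := by
  unfold dot3
  have hfi : ∀ i, ContinuousOn (fun t => f t i) s := fun i =>
    (continuous_apply i).comp_continuousOn hf
  have hgi : ∀ i, ContinuousOn (fun t => g t i) s := fun i =>
    (continuous_apply i).comp_continuousOn hg
  exact (((hfi 0).mul (hgi 0)).add ((hfi 1).mul (hgi 1))).add ((hfi 2).mul (hgi 2))

/-- A solution of the first-order system on `[r₀, s]`. -/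
def PSol (k b c μ r₀ : ℝ) (x₀ : E3 × E3) (s : ℝ) (p : ℝ → E3 × E3) : Prop :=
  p r₀ = x₀ ∧ ∀ r ∈ Icc r₀ s, HasDerivWithinAt p (pvec k b c μ r (p r)) (Icc r₀ s) r

section inv

variable {k b c μ r₀ s : ℝ} {W₀ V₀ : E3} {p : ℝ → E3 × E3}

lemma psol_cont (hp : PSol k b c μ r₀ (W₀, V₀) s p) : ContinuousOn p (Icc r₀ s) :=
  fun t ht => (hp.2 t ht).continuousWithinAt

/-- Sphere invariance via Grönwall-type uniqueness. -/
lemma psol_sphere (h0 : 0 < r₀) (hs : r₀ ≤ s)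
    (hW₀ : dot3 W₀ W₀ = 1) (hV₀ : dot3 W₀ V₀ = 0)
    (hp : PSol k b c μ r₀ (W₀, V₀) s p) :
    ∀ r ∈ Icc r₀ s, dot3 (p r).1 (p r).1 = 1 ∧ dot3 (p r).1 (p r).2 = 0 := by
  classical
  set f : ℝ → ℝ × ℝ :=
    fun t => (dot3 (p t).1 (p t).1 - 1, dot3 (p t).1 (p t).2) with hf
  set A : ℝ → ℝ :=
    fun t => -(dot3 (p t).2 (p t).2) + (gder k b ((p t).1 0) / t^2 + μ) * ((p t).1 0) with hA
  -- continuity and bound for A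
  have hpc := psol_cont hp
  have hw1 : ContinuousOn (fun t => (p t).1) (Icc r₀ s) := hpc.fst
  have hw2 : ContinuousOn (fun t => (p t).2) (Icc r₀ s) := hpc.snd
  have hw10 : ContinuousOn (fun t => (p t).1 0) (Icc r₀ s) :=
    (continuous_apply (0 : Fin 3)).comp_continuousOn hw1
  have hAc : ContinuousOn A (Icc r₀ s) := by
    apply ContinuousOn.add
    · exact (continuousOn_dot3_comp hw2 hw2).neg
    · apply ContinuousOn.mul _ hw10
      apply ContinuousOn.add _ continuousOn_const
      apply ContinuousOn.div
      · have : Continuous (gder k b) := by unfold gder; fun_prop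
        exact this.comp_continuousOn hw10
      · fun_prop
      · intro t ht
        exact pow_ne_zero 2 (ne_of_gt (lt_of_lt_of_le h0 ht.1))
  obtain ⟨BA, hBA⟩ := isCompact_Icc.exists_bound_of_continuousOn hAc
  set BA' : ℝ := max BA 0 with hBA'
  have hBA'0 : 0 ≤ BA' := le_max_right _ _
  have hAbd : ∀ t ∈ Icc r₀ s, |A t| ≤ BA' := fun t ht =>
    le_max_of_le_left (by simpa using hBA t ht)
  -- the comparison linear field
  set vl : ℝ → ℝ × ℝ → ℝ × ℝ := fun t y =>
    if t ∈ Icc r₀ s then (2 * y.2, A t * y.1 - (1/t) * y.2) else 0 with hvl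
  set K : ℝ≥0 := ⟨2 + BA' + 1/r₀, by positivity⟩ with hK
  have hlip : ∀ t, LipschitzOnWith K (vl t) univ := by
    intro t
    rw [lipschitzOnWith_univ]
    apply LipschitzWith.of_dist_le_mul
    intro y z
    rw [hvl]
    by_cases ht : t ∈ Icc r₀ s
    · simp only [if_pos ht]
      have h1r : 0 < 1/t := by
        have : 0 < t := lt_of_lt_of_le h0 ht.1
        positivity
      have h1r' : 1/t ≤ 1/r₀ := by
        apply one_div_le_one_div_of_le h0 ht.1
      have hAt := hAbd t ht
      rw [Prod.dist_eq, Prod.dist_eq]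
      simp only [Real.dist_eq]
      have hd1 : |y.1 - z.1| ≤ max |y.1 - z.1| |y.2 - z.2| := le_max_left _ _
      have hd2 : |y.2 - z.2| ≤ max |y.1 - z.1| |y.2 - z.2| := le_max_right _ _
      have hKc : (K : ℝ) = 2 + BA' + 1/r₀ := rfl
      apply max_le
      · have : |2 * y.2 - 2 * z.2| = 2 * |y.2 - z.2| := by
          rw [show 2*y.2 - 2*z.2 = 2*(y.2-z.2) by ring, abs_mul]
          norm_num
        rw [this, hKc]
        nlinarith [abs_nonneg (y.1 - z.1), abs_nonneg (y.2 - z.2), h1r.le,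
          lt_of_lt_of_le h0 (le_refl r₀), one_div_pos.2 h0]
      · have heq : A t * y.1 - 1/t * y.2 - (A t * z.1 - 1/t * z.2)
            = A t * (y.1 - z.1) - (1/t) * (y.2 - z.2) := by ring
        rw [heq, hKc]
        have h1 : |A t * (y.1 - z.1) - (1/t) * (y.2 - z.2)|
            ≤ |A t| * |y.1 - z.1| + (1/t) * |y.2 - z.2| := by
          calc _ ≤ |A t * (y.1 - z.1)| + |(1/t) * (y.2 - z.2)| := abs_sub _ _
            _ = |A t| * |y.1 - z.1| + (1/t) * |y.2 - z.2| := by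
                rw [abs_mul, abs_mul, abs_of_pos h1r]
        have h2 : |A t| * |y.1 - z.1| ≤ BA' * max |y.1 - z.1| |y.2 - z.2| := by
          apply mul_le_mul hAt hd1 (abs_nonneg _) hBA'0
        have h3 : (1/t) * |y.2 - z.2| ≤ (1/r₀) * max |y.1 - z.1| |y.2 - z.2| := by
          apply mul_le_mul h1r' hd2 (abs_nonneg _) (le_of_lt (one_div_pos.2 h0))
        have hm : 0 ≤ max |y.1 - z.1| |y.2 - z.2| :=
          le_trans (abs_nonneg _) (le_max_left _ _)
        nlinarith
    · simp only [if_neg ht]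
      simp only [dist_self]
      positivity
  -- f solves the linear ODE
  have hforth : ∀ t ∈ Icc r₀ s,
      HasDerivWithinAt f ((2 * (f t).2,
        A t * (f t).1 - (1/t) * (f t).2)) (Icc r₀ s) t := by
    intro t ht
    have ht0 : (t:ℝ) ≠ 0 := ne_of_gt (lt_of_lt_of_le h0 ht.1)
    have hder := hp.2 t ht
    have hw : HasDerivWithinAt (fun u => (p u).1) ((pvec k b c μ t (p t)).1) (Icc r₀ s) t :=
      hdw_fst hder
    have hv : HasDerivWithinAt (fun u => (p u).2) ((pvec k b c μ t (p t)).2) (Icc r₀ s) t :=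
      hdw_snd hder
    have h1 : HasDerivWithinAt (fun u => dot3 (p u).1 (p u).1 - 1)
        (dot3 (pvec k b c μ t (p t)).1 ((p t).1)
          + dot3 ((p t).1) (pvec k b c μ t (p t)).1) (Icc r₀ s) t :=
      (hasDerivWithinAt_dot3 hw hw).sub_const 1
    have h2 : HasDerivWithinAt (fun u => dot3 (p u).1 (p u).2)
        (dot3 (pvec k b c μ t (p t)).1 ((p t).2)
          + dot3 ((p t).1) (pvec k b c μ t (p t)).2) (Icc r₀ s) t :=
      hasDerivWithinAt_dot3 hw hv
    have hP1 : (pvec k b c μ t (p t)).1 = (p t).2 := by rw [pvec_eq]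
    have hP2 : (pvec k b c μ t (p t)).2
        = -(dot3 (p t).2 (p t).2 • (p t).1 + (1 / t) • (p t).2
          + (gder k b ((p t).1 0) / t ^ 2) • (e0 - (p t).1 0 • (p t).1)
          + μ • (e0 - (p t).1 0 • (p t).1)
          + (c / t - t / 2) • cross3 (p t).1 (p t).2) := by rw [pvec_eq]
    have := h1.prodMk h2
    rw [hP1, hP2] at this
    simp only [dot3_neg, dot3_add', dot3_sub', dot3_smul', dot3_e0, dot3_cross₁] at this
    convert this using 2
    · -- first component
      simp only [hf]
      rw [dot3_comm' ((p t).1) ((p t).2)]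
      ring
    · -- second component
      simp only [hf, hA]
      rw [dot3_comm' ((p t).1) ((p t).2)]
      ring
  -- uniqueness against the zero solution
  have huniq : EqOn f (fun _ => ((0:ℝ), (0:ℝ))) (Icc r₀ s) := by
    apply ODE_solution_unique_of_mem_Icc_right (v := vl) (s := fun _ => univ) (fun t _ => hlip t)
    · -- continuity of f
      apply ContinuousOn.prodMk
      · exact ((continuousOn_dot3_comp hw1 hw1).sub continuousOn_const)
      · exact continuousOn_dot3_comp hw1 hw2
    · intro t ht
      have ht' : t ∈ Icc r₀ s := ⟨ht.1, le_of_lt ht.2⟩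
      have h := hforth t ht'
      have hmem : Icc t s ∈ 𝓝[Ici t] t := Icc_mem_nhdsGE_of_mem ⟨le_refl t, ht.2⟩
      have h' : HasDerivWithinAt f ((2 * (f t).2, A t * (f t).1 - (1/t) * (f t).2))
          (Icc t s) t := h.mono (Icc_subset_Icc ht.1 le_rfl)
      have h'' := h'.mono_of_mem_nhdsWithin hmem
      have hval : vl t (f t) = (2 * (f t).2, A t * (f t).1 - (1/t) * (f t).2) := by
        simp only [hvl]
        rw [if_pos ht']
      rw [hval]
      exact h''
    · exact fun t _ => mem_univ _
    · exact continuousOn_const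
    · intro t ht
      have ht' : t ∈ Icc r₀ s := ⟨ht.1, le_of_lt ht.2⟩
      have hval : vl t ((0:ℝ), (0:ℝ)) = ((0:ℝ), (0:ℝ)) := by
        simp only [hvl]
        split <;> norm_num
      simp only [hval]
      exact hasDerivWithinAt_const t (Ici t) ((0:ℝ), (0:ℝ))
    · exact fun t _ => mem_univ _
    · simp [hf, hp.1, hW₀, hV₀]
  intro r hr
  have := huniq hr
  simp only [hf, Prod.mk.injEq] at this
  constructor
  · linarith [this.1]
  · exact this.2

end inv

/-! chunk 3 : energy bound for pair solutions -/

noncomputable def Cg (k b : ℝ) : ℝ := k^2/2 + 2*|b*k| + 4*k^2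

lemma Cg_nonneg (k b : ℝ) : 0 ≤ Cg k b := by unfold Cg; positivity

lemma gfun_bound (k b : ℝ) {x : ℝ} (hx : x ∈ Icc (-1:ℝ) 1) :
    |gfun k b x| ≤ Cg k b := by
  obtain ⟨h1, h2⟩ := hx
  have e1 : (0:ℝ) ≤ 1 - x^2 := by nlinarith
  have e2 : (1:ℝ) - x^2 ≤ 1 := by nlinarith
  have e3 : (0:ℝ) ≤ 1 - x := by linarith
  have e4 : (1:ℝ) - x ≤ 2 := by linarith
  have e5 : (1-x)^2 ≤ 4 := by nlinarith
  have e6 : |b * k * (1 - x)| ≤ 2 * |b*k| := by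
    rw [abs_mul, abs_of_nonneg e3]
    nlinarith [abs_nonneg (b*k)]
  have e7 : -(2*|b*k|) ≤ b * k * (1-x) := neg_le_of_abs_le (by linarith [e6])
  have e8 : b * k * (1-x) ≤ 2*|b*k| := le_of_abs_le (by linarith [e6])
  rw [abs_le]
  unfold Cg
  constructor <;> unfold gfun <;>
    nlinarith [sq_nonneg k, sq_nonneg (k*x), sq_nonneg (k*(1-x))]

lemma hasDerivAt_dot3 {f g : ℝ → Fin 3 → ℝ} {f' g' : Fin 3 → ℝ} {x : ℝ}
    (hf : HasDerivAt f f' x) (hg : HasDerivAt g g' x) :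
    HasDerivAt (fun t => dot3 (f t) (g t)) (dot3 f' (g x) + dot3 (f x) g') x := by
  have Hf := fun i => hasDerivAt_pi.1 hf i
  have Hg := fun i => hasDerivAt_pi.1 hg i
  have : HasDerivAt (fun t => f t 0 * g t 0 + f t 1 * g t 1 + f t 2 * g t 2)
      ((f' 0 * g x 0 + f x 0 * g' 0) + (f' 1 * g x 1 + f x 1 * g' 1)
        + (f' 2 * g x 2 + f x 2 * g' 2)) x :=
    (((Hf 0).mul (Hg 0)).add ((Hf 1).mul (Hg 1))).add ((Hf 2).mul (Hg 2))
  refine this.congr_deriv ?_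
  simp only [dot3]; ring

lemma hda_fst {p : ℝ → E3 × E3} {P : E3 × E3} {x : ℝ}
    (h : HasDerivAt p P x) : HasDerivAt (fun t => (p t).1) P.1 x := by
  simpa using (h.hasFDerivAt.fst).hasDerivAt

lemma hda_snd {p : ℝ → E3 × E3} {P : E3 × E3} {x : ℝ}
    (h : HasDerivAt p P x) : HasDerivAt (fun t => (p t).2) P.2 x := by
  simpa using (h.hasFDerivAt.snd).hasDerivAt

/-- energy of a pair trajectory -/
noncomputable def enp (k b μ : ℝ) (p : ℝ → E3 × E3) (r : ℝ) : ℝ :=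
  1/2 * dot3 (p r).2 (p r).2 + (gfun k b ((p r).1 0) + Cg k b) * (r^2)⁻¹ + μ * ((p r).1 0)

noncomputable def E₀ (k b μ r₀ : ℝ) (W₀ V₀ : E3) : ℝ :=
  1/2 * dot3 V₀ V₀ + (gfun k b (W₀ 0) + Cg k b) * (r₀^2)⁻¹ + μ * (W₀ 0)

noncomputable def rho (k b μ r₀ : ℝ) (W₀ V₀ : E3) : ℝ :=
  1 + max (2 * E₀ k b μ r₀ W₀ V₀ + 2*|μ|) 0

lemma rho_pos (k b μ r₀ : ℝ) (W₀ V₀ : E3) : 1 ≤ rho k b μ r₀ W₀ V₀ := by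
  unfold rho
  have := le_max_right (2 * E₀ k b μ r₀ W₀ V₀ + 2*|μ|) 0
  linarith

section bound

variable {k b c μ r₀ s : ℝ} {W₀ V₀ : E3} {p : ℝ → E3 × E3}

lemma psol_enp_anti (h0 : 0 < r₀) (hs : r₀ ≤ s)
    (hW₀ : dot3 W₀ W₀ = 1) (hV₀ : dot3 W₀ V₀ = 0)
    (hp : PSol k b c μ r₀ (W₀, V₀) s p) :
    AntitoneOn (enp k b μ p) (Icc r₀ s) := by
  have hsph := psol_sphere h0 hs hW₀ hV₀ hp
  have hpc := psol_cont hp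
  have hw1 : ContinuousOn (fun t => (p t).1) (Icc r₀ s) := hpc.fst
  have hw2 : ContinuousOn (fun t => (p t).2) (Icc r₀ s) := hpc.snd
  have hw10 : ContinuousOn (fun t => (p t).1 0) (Icc r₀ s) :=
    (continuous_apply (0 : Fin 3)).comp_continuousOn hw1
  apply antitoneOn_of_deriv_nonpos (convex_Icc r₀ s)
  · -- continuity of enp
    apply ContinuousOn.add
    apply ContinuousOn.add
    · exact (continuousOn_dot3_comp hw2 hw2).const_smul (1/2:ℝ) |>.congr (fun x _ => by
        simp [smul_eq_mul])
    · apply ContinuousOn.mul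
      · apply ContinuousOn.add _ continuousOn_const
        have : Continuous (gfun k b) := by unfold gfun; fun_prop
        exact this.comp_continuousOn hw10
      · apply ContinuousOn.inv₀ (by fun_prop)
        intro t ht
        exact pow_ne_zero 2 (ne_of_gt (lt_of_lt_of_le h0 ht.1))
    · exact continuousOn_const.mul hw10
  · -- differentiability on interior
    rw [interior_Icc]
    intro t ht
    have ht' : t ∈ Icc r₀ s := Ioo_subset_Icc_self ht
    have hP : HasDerivAt p (pvec k b c μ t (p t)) t :=
      (hp.2 t ht').hasDerivAt (Icc_mem_nhds ht.1 ht.2)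
    have ht0 : t ≠ 0 := ne_of_gt (lt_of_lt_of_le h0 ht'.1)
    have Hw := hda_fst hP
    have Hv := hda_snd hP
    have Hq := hasDerivAt_dot3 Hv Hv
    have Hφ : HasDerivAt (fun u => (p u).1 0) ((pvec k b c μ t (p t)).1 0) t :=
      hasDerivAt_pi.1 Hw 0
    have Hg : HasDerivAt (fun u => gfun k b ((p u).1 0))
        (gder k b ((p t).1 0) * ((pvec k b c μ t (p t)).1 0)) t :=
      by have := (hasDerivAt_gfun k b ((p t).1 0)).comp t Hφ; exact this
    have Hinv : HasDerivAt (fun u : ℝ => (u^2)⁻¹)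
        (-(((2:ℕ):ℝ) * t^(2-1)) / (t^2)^2) t := (hasDerivAt_pow 2 t).inv (pow_ne_zero 2 ht0)
    exact (((Hq.const_mul (1/2:ℝ)).add ((Hg.add_const (Cg k b)).mul Hinv)).add
      (Hφ.const_mul μ)).differentiableAt.differentiableWithinAt
  · -- derivative nonpositive
    rw [interior_Icc]
    intro t ht
    have ht' : t ∈ Icc r₀ s := Ioo_subset_Icc_self ht
    have htpos : 0 < t := lt_of_lt_of_le h0 ht'.1
    have ht0 : t ≠ 0 := ne_of_gt htpos
    have hP : HasDerivAt p (pvec k b c μ t (p t)) t :=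
      (hp.2 t ht').hasDerivAt (Icc_mem_nhds ht.1 ht.2)
    have hP1 : (pvec k b c μ t (p t)).1 = (p t).2 := by rw [pvec_eq]
    have hP2 : (pvec k b c μ t (p t)).2
        = -(dot3 (p t).2 (p t).2 • (p t).1 + (1 / t) • (p t).2
          + (gder k b ((p t).1 0) / t ^ 2) • (e0 - (p t).1 0 • (p t).1)
          + μ • (e0 - (p t).1 0 • (p t).1)
          + (c / t - t / 2) • cross3 (p t).1 (p t).2) := by rw [pvec_eq]
    have Hw := hda_fst hP
    have Hv := hda_snd hP
    have Hq := hasDerivAt_dot3 Hv Hv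
    have Hφ : HasDerivAt (fun u => (p u).1 0) ((pvec k b c μ t (p t)).1 0) t :=
      hasDerivAt_pi.1 Hw 0
    have Hg : HasDerivAt (fun u => gfun k b ((p u).1 0))
        (gder k b ((p t).1 0) * ((pvec k b c μ t (p t)).1 0)) t :=
      by have := (hasDerivAt_gfun k b ((p t).1 0)).comp t Hφ; exact this
    have Hinv : HasDerivAt (fun u : ℝ => (u^2)⁻¹)
        (-(((2:ℕ):ℝ) * t^(2-1)) / (t^2)^2) t := (hasDerivAt_pow 2 t).inv (pow_ne_zero 2 ht0)
    have Htot := ((Hq.const_mul (1/2:ℝ)).add ((Hg.add_const (Cg k b)).mul Hinv)).add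
      (Hφ.const_mul μ)
    have hEd : HasDerivAt (enp k b μ p)
        (1/2 * (dot3 (pvec k b c μ t (p t)).2 ((p t).2)
            + dot3 ((p t).2) (pvec k b c μ t (p t)).2)
          + (gder k b ((p t).1 0) * ((pvec k b c μ t (p t)).1 0) * (t^2)⁻¹
            + (gfun k b ((p t).1 0) + Cg k b) * (-(((2:ℕ):ℝ) * t^(2-1)) / (t^2)^2))
          + μ * ((pvec k b c μ t (p t)).1 0)) t := Htot
    rw [hEd.deriv]
    -- now bound the value
    have horth : dot3 (p t).1 (p t).2 = 0 := (hsph t ht').2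
    have hsp : dot3 (p t).1 (p t).1 = 1 := (hsph t ht').1
    have horth' : dot3 (p t).2 (p t).1 = 0 := by
      rw [dot3_comm']; exact horth
    have hvv : dot3 ((p t).2) (pvec k b c μ t (p t)).2
        = -((1/t) * dot3 (p t).2 (p t).2
            + (gder k b ((p t).1 0) / t^2 + μ) * ((p t).2 0)) := by
      rw [hP2]
      simp only [dot3_neg, dot3_add', dot3_sub', dot3_smul', dot3_e0, dot3_cross₂, horth']
      ring
    have hq0 : 0 ≤ dot3 (p t).2 (p t).2 := dot3_self_nonneg' _
    have hphi : (p t).1 0 ∈ Icc (-1:ℝ) 1 := by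
      have h1 := hsp
      simp only [dot3] at h1
      constructor <;>
        nlinarith [sq_nonneg ((p t).1 1), sq_nonneg ((p t).1 2),
          sq_nonneg ((p t).1 0 + 1), sq_nonneg ((p t).1 0 - 1)]
    have hgb : 0 ≤ gfun k b ((p t).1 0) + Cg k b := by
      have := neg_le_of_abs_le (gfun_bound k b hphi)
      linarith
    rw [dot3_comm' ((pvec k b c μ t (p t)).2) ((p t).2), hvv, hP1]
    have hgoal : 1/2 * (-((1/t) * dot3 (p t).2 (p t).2
            + (gder k b ((p t).1 0) / t^2 + μ) * ((p t).2 0))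
            + -((1/t) * dot3 (p t).2 (p t).2
            + (gder k b ((p t).1 0) / t^2 + μ) * ((p t).2 0)))
          + (gder k b ((p t).1 0) * ((p t).2 0) * (t^2)⁻¹
            + (gfun k b ((p t).1 0) + Cg k b) * (-(((2:ℕ):ℝ) * t^(2-1)) / (t^2)^2))
          + μ * ((p t).2 0)
        = -(dot3 (p t).2 (p t).2 / t)
          - 2 * (gfun k b ((p t).1 0) + Cg k b) * (t^3)⁻¹ := by
      field_simp
      ring
    rw [hgoal]
    have t1 : 0 ≤ dot3 (p t).2 (p t).2 / t := div_nonneg hq0 htpos.le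
    have t2 : 0 ≤ 2 * (gfun k b ((p t).1 0) + Cg k b) * (t^3)⁻¹ := by positivity
    linarith

end bound

/-! chunk 4 : norm bound, glue, small lemmas -/

section bound2
variable {k b c μ r₀ s : ℝ} {W₀ V₀ : E3} {p : ℝ → E3 × E3}

set_option maxHeartbeats 1000000 in
lemma psol_norm_le (h0 : 0 < r₀) (hs : r₀ ≤ s)
    (hW₀ : dot3 W₀ W₀ = 1) (hV₀ : dot3 W₀ V₀ = 0)
    (hp : PSol k b c μ r₀ (W₀, V₀) s p) :
    ∀ r ∈ Icc r₀ s, ‖p r‖ ≤ rho k b μ r₀ W₀ V₀ := by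
  intro r hr
  have hanti := psol_enp_anti h0 hs hW₀ hV₀ hp
  have hsph := psol_sphere h0 hs hW₀ hV₀ hp
  have hr0mem : r₀ ∈ Icc r₀ s := ⟨le_rfl, hs⟩
  have hE0 : enp k b μ p r₀ = E₀ k b μ r₀ W₀ V₀ := by
    unfold enp E₀
    rw [hp.1]
  have hle : enp k b μ p r ≤ E₀ k b μ r₀ W₀ V₀ := by
    rw [← hE0]
    exact hanti hr0mem hr hr.1
  have hsp := (hsph r hr).1
  have hphi : (p r).1 0 ∈ Icc (-1:ℝ) 1 := by
    simp only [dot3] at hsp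
    constructor <;>
      nlinarith [sq_nonneg ((p r).1 1), sq_nonneg ((p r).1 2),
        sq_nonneg ((p r).1 0 + 1), sq_nonneg ((p r).1 0 - 1)]
  have hgb : 0 ≤ gfun k b ((p r).1 0) + Cg k b := by
    have := neg_le_of_abs_le (gfun_bound k b hphi)
    linarith
  have hrpos : 0 < r := lt_of_lt_of_le h0 hr.1
  have hfr : 0 ≤ (gfun k b ((p r).1 0) + Cg k b) * (r^2)⁻¹ := by positivity
  have hmu : -|μ| ≤ μ * ((p r).1 0) := by
    have h5 : |μ * (p r).1 0| ≤ |μ| := by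
      rw [abs_mul]
      have h6 : |(p r).1 0| ≤ 1 := abs_le.2 ⟨hphi.1, hphi.2⟩
      nlinarith [abs_nonneg μ]
    linarith [neg_abs_le (μ * (p r).1 0)]
  have hq : dot3 (p r).2 (p r).2 ≤ 2 * E₀ k b μ r₀ W₀ V₀ + 2*|μ| := by
    have : enp k b μ p r = 1/2 * dot3 (p r).2 (p r).2
        + (gfun k b ((p r).1 0) + Cg k b) * (r^2)⁻¹ + μ * ((p r).1 0) := rfl
    linarith [hle]
  have hqmax : dot3 (p r).2 (p r).2 ≤ max (2 * E₀ k b μ r₀ W₀ V₀ + 2*|μ|) 0 :=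
    le_max_of_le_left hq
  have hq0 : (0:ℝ) ≤ max (2 * E₀ k b μ r₀ W₀ V₀ + 2*|μ|) 0 := le_max_right _ _
  -- coordinatewise bounds
  have hself : ∀ u : E3, dot3 u u = u 0 ^2 + u 1^2 + u 2^2 := by
    intro u; simp [dot3]; ring
  have hwc : ∀ i, ‖(p r).1 i‖ ≤ 1 := by
    intro i
    rw [Real.norm_eq_abs, abs_le]
    rw [hself] at hsp
    fin_cases i <;>
      simp only [Fin.zero_eta, Fin.mk_one, Fin.reduceFinMk, Fin.isValue] <;>
      constructor <;>
      nlinarith [sq_nonneg ((p r).1 0), sq_nonneg ((p r).1 1), sq_nonneg ((p r).1 2)]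
  have hvc : ∀ i, ‖(p r).2 i‖ ≤ 1 + max (2 * E₀ k b μ r₀ W₀ V₀ + 2*|μ|) 0 := by
    intro i
    rw [Real.norm_eq_abs, abs_le]
    have h7 : ((p r).2 i)^2 ≤ dot3 (p r).2 (p r).2 := by
      rw [hself]
      fin_cases i <;>
        simp only [Fin.zero_eta, Fin.mk_one, Fin.reduceFinMk, Fin.isValue] <;>
        nlinarith [sq_nonneg ((p r).2 0), sq_nonneg ((p r).2 1), sq_nonneg ((p r).2 2)]
    constructor <;> nlinarith [sq_nonneg ((p r).2 i - 1), sq_nonneg ((p r).2 i + 1)]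
  rw [Prod.norm_def]
  unfold rho
  apply max_le
  · rw [pi_norm_le_iff_of_nonneg (by linarith)]
    intro i
    exact le_trans (hwc i) (by linarith)
  · rw [pi_norm_le_iff_of_nonneg (by linarith)]
    intro i
    exact le_trans (hvc i) (by linarith)

end bound2

lemma hasDerivWithinAt_singleton' {E : Type*} [NormedAddCommGroup E] [NormedSpace ℝ E]
    (f : ℝ → E) (x : ℝ) (v : E) : HasDerivWithinAt f v {x} x := by
  simp only [HasDerivWithinAt, HasDerivAtFilter, nhdsWithin_singleton,
    hasFDerivAtFilter_iff_isLittleO, Asymptotics.isLittleO_pure]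
  simp

section glue
variable {k b c μ : ℝ}

lemma psol_mono {r₀ x₀ s s'} {p : ℝ → E3 × E3} (hs' : s' ≤ s) (hr : r₀ ≤ s')
    (hp : PSol k b c μ r₀ x₀ s p) : PSol k b c μ r₀ x₀ s' p := by
  refine ⟨hp.1, fun r hr' => ?_⟩
  exact (hp.2 r ⟨hr'.1, le_trans hr'.2 hs'⟩).mono (Icc_subset_Icc_right hs')

lemma psol_glue {a m bb : ℝ} (ham : a ≤ m) (hmb : m ≤ bb) {p q : ℝ → E3 × E3}
    (hp : ∀ r ∈ Icc a m, HasDerivWithinAt p (pvec k b c μ r (p r)) (Icc a m) r)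
    (hq : ∀ r ∈ Icc m bb, HasDerivWithinAt q (pvec k b c μ r (q r)) (Icc m bb) r)
    (heq : p m = q m) :
    ∀ r ∈ Icc a bb,
      HasDerivWithinAt (fun u => if u ≤ m then p u else q u)
        (pvec k b c μ r ((fun u => if u ≤ m then p u else q u) r)) (Icc a bb) r := by
  set g : ℝ → E3 × E3 := fun u => if u ≤ m then p u else q u with hg
  have hgp : EqOn g p (Icc a m) := fun u hu => by simp [hg, if_pos hu.2]
  have hgq : EqOn g q (Icc m bb) := by
    intro u hu
    by_cases hum : u ≤ m
    · have : u = m := le_antisymm hum hu.1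
      simp [hg, this, heq]
    · simp [hg, if_neg hum]
  intro r hr
  rcases lt_trichotomy r m with hrm | hrm | hrm
  · -- r < m
    have hr' : r ∈ Icc a m := ⟨hr.1, le_of_lt hrm⟩
    have h1 := (hp r hr').congr (fun u hu => hgp hu) (hgp hr')
    have h1' : HasDerivWithinAt g (pvec k b c μ r (g r)) (Icc a m) r := by
      rw [hgp hr']; exact h1
    apply h1'.mono_of_mem_nhdsWithin
    apply mem_of_superset (inter_mem_nhdsWithin (Icc a bb) (Iio_mem_nhds hrm))
    rintro u ⟨hu1, hu2⟩
    exact ⟨hu1.1, le_of_lt hu2⟩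
  · -- r = m
    subst hrm
    have hmm1 : r ∈ Icc a r := ⟨hr.1, le_rfl⟩
    have hmm2 : r ∈ Icc r bb := ⟨le_rfl, hr.2⟩
    have h1 := (hp r ⟨hr.1, le_rfl⟩).congr (fun u hu => hgp hu) (hgp ⟨hr.1, le_rfl⟩)
    have h2 := (hq r ⟨le_rfl, hr.2⟩).congr (fun u hu => hgq hu) (hgq ⟨le_rfl, hr.2⟩)
    have h1' : HasDerivWithinAt g (pvec k b c μ r (g r)) (Icc a r) r := by
      rw [hgp ⟨hr.1, le_rfl⟩]; exact h1
    have h2' : HasDerivWithinAt g (pvec k b c μ r (g r)) (Icc r bb) r := by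
      rw [hgq ⟨le_rfl, hr.2⟩]; exact h2
    have := h1'.union h2'
    rwa [Icc_union_Icc_eq_Icc hr.1 hr.2] at this
  · -- r > m
    have hr' : r ∈ Icc m bb := ⟨le_of_lt hrm, hr.2⟩
    have h1 := (hq r hr').congr (fun u hu => hgq hu) (hgq hr')
    have h1' : HasDerivWithinAt g (pvec k b c μ r (g r)) (Icc m bb) r := by
      rw [hgq hr']; exact h1
    apply h1'.mono_of_mem_nhdsWithin
    apply mem_of_superset (inter_mem_nhdsWithin (Icc a bb) (Ioi_mem_nhds hrm))
    rintro u ⟨hu1, hu2⟩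
    exact ⟨le_of_lt hu2, hu1.2⟩

end glue

/-! chunk 5 : step, induction, uniqueness -/

section step
variable {k b c μ r₀ : ℝ} {W₀ V₀ : E3}

lemma psol_contt (k b c μ : ℝ) {a bb : ℝ} (ha : 0 < a) (x : E3 × E3) :
    ContinuousOn (fun t => pvec k b c μ t x) (Icc a bb) := by
  have := (contDiffOn_pvec k b c μ).continuousOn
  have hmap : MapsTo (fun t : ℝ => (t, x)) (Icc a bb) {q : ℝ × (E3 × E3) | q.1 ≠ 0} :=
    fun t ht => ne_of_gt (lt_of_lt_of_le ha ht.1)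
  exact this.comp (Continuous.continuousOn (by fun_prop)) hmap

lemma psol_step (h0 : 0 < r₀)
    (hW₀ : dot3 W₀ W₀ = 1) (hV₀ : dot3 W₀ V₀ = 0) (T : ℝ) (hT : r₀ ≤ T) :
    ∃ δ : ℝ, 0 < δ ∧ ∀ s, r₀ ≤ s → s ≤ T → ∀ p, PSol k b c μ r₀ (W₀, V₀) s p →
      ∃ p', PSol k b c μ r₀ (W₀, V₀) (min (s + δ) T) p' := by
  obtain ⟨K, C, hC, hlip, hbound⟩ :=
    exists_K_C k b c μ r₀ (T+1) (rho k b μ r₀ W₀ V₀ + 1) h0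
  refine ⟨min 1 (1/(C+1)), by positivity, ?_⟩
  intro s hs hsT p hp
  set δ := min 1 (1/(C+1)) with hδ
  have hδpos : 0 < δ := by positivity
  have hδ1 : δ ≤ 1 := min_le_left _ _
  have hx₀ : ‖p s‖ ≤ rho k b μ r₀ W₀ V₀ :=
    psol_norm_le h0 hs hW₀ hV₀ hp s ⟨hs, le_rfl⟩
  have hball : closedBall (p s) 1 ⊆ closedBall (0 : E3 × E3) (rho k b μ r₀ W₀ V₀ + 1) := by
    apply closedBall_subset_closedBall'
    rw [dist_zero_right]
    linarith
  have hIccsub : Icc s (s+δ) ⊆ Icc r₀ (T+1) := by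
    apply Icc_subset_Icc hs
    linarith
  have hs0 : s ∈ Icc s (s+δ) := ⟨le_rfl, by linarith⟩
  have hPL : IsPicardLindelof (pvec k b c μ) (⟨s, hs0⟩ : Icc s (s+δ)) (p s) 1 0 ⟨C, hC⟩ K := by
    constructor
    · intro t ht
      exact (hlip t (hIccsub ht)).mono hball
    · intro x hx
      exact (psol_contt k b c μ (lt_of_lt_of_le h0 hs) x).mono (Icc_subset_Icc le_rfl le_rfl)
    · intro t ht x hx
      exact hbound t (hIccsub ht) x (hball hx)
    · have : max (s + δ - s) (s - s) = δ := by
        rw [max_eq_left] <;> linarith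
      simp only [NNReal.coe_mk, NNReal.coe_one, NNReal.coe_zero, sub_zero]
      rw [this]
      calc C * δ ≤ C * (1/(C+1)) := by
            apply mul_le_mul_of_nonneg_left (min_le_right _ _) hC
        _ ≤ 1 := by
            rw [mul_one_div, div_le_one (by linarith)]
            linarith

  obtain ⟨f, hf0, hf⟩ := hPL.exists_eq_forall_mem_Icc_hasDerivWithinAt₀
  -- glue
  have hglue := psol_glue (k := k) (b := b) (c := c) (μ := μ) hs (by linarith : s ≤ s + δ)
    (fun r hr => hp.2 r hr) (fun r hr => hf r hr) hf0.symm
  set pg : ℝ → E3 × E3 := fun u => if u ≤ s then p u else f u with hpg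
  have hpsol : PSol k b c μ r₀ (W₀, V₀) (s+δ) pg := by
    constructor
    · simp only [hpg, if_pos hs, hp.1]
    · exact hglue
  exact ⟨pg, psol_mono (min_le_left _ _) (le_min (by linarith) hT) hpsol⟩

lemma psol_exists (h0 : 0 < r₀)
    (hW₀ : dot3 W₀ W₀ = 1) (hV₀ : dot3 W₀ V₀ = 0) (T : ℝ) (hT : r₀ ≤ T) :
    ∃ p, PSol k b c μ r₀ (W₀, V₀) T p := by
  obtain ⟨δ, hδpos, hstep⟩ := psol_step (k := k) (b := b) (c := c) (μ := μ) h0 hW₀ hV₀ T hT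
  have base : PSol k b c μ r₀ (W₀, V₀) r₀ (fun _ => (W₀, V₀)) := by
    constructor
    · rfl
    · intro r hr
      have : r = r₀ := le_antisymm hr.2 hr.1
      subst this
      rw [Icc_self]
      exact hasDerivWithinAt_singleton' _ _ _
  have key : ∀ n : ℕ, ∃ p, PSol k b c μ r₀ (W₀, V₀) (min (r₀ + n * δ) T) p := by
    intro n
    induction n with
    | zero =>
      refine ⟨fun _ => (W₀, V₀), ?_⟩
      have : min (r₀ + (0:ℕ) * δ) T = r₀ := by
        push_cast
        rw [zero_mul, add_zero, min_eq_left hT]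
      rw [this]
      exact base
    | succ n ih =>
      obtain ⟨p, hp⟩ := ih
      by_cases hc : r₀ + n * δ ≤ T
      · have hmin : min (r₀ + n * δ) T = r₀ + n * δ := min_eq_left hc
        rw [hmin] at hp
        have hge : r₀ ≤ r₀ + n * δ := by
          have : (0:ℝ) ≤ n * δ := mul_nonneg (Nat.cast_nonneg n) hδpos.le
          linarith
        obtain ⟨p', hp'⟩ := hstep (r₀ + n * δ) hge hc p hp
        refine ⟨p', ?_⟩
        have : min (r₀ + n * δ + δ) T = min (r₀ + (n+1 : ℕ) * δ) T := by
          push_cast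
          ring_nf
        rwa [this] at hp'
      · push_neg at hc
        have h1 : min (r₀ + n * δ) T = T := min_eq_right (le_of_lt hc)
        have h2 : min (r₀ + (n+1 : ℕ) * δ) T = T := by
          apply min_eq_right
          push_cast
          nlinarith
        rw [h2, ← h1]
        exact ⟨p, hp⟩
  obtain ⟨n, hn⟩ := exists_nat_ge ((T - r₀)/δ)
  obtain ⟨p, hp⟩ := key n
  have : min (r₀ + n * δ) T = T := by
    apply min_eq_right
    rw [div_le_iff₀ hδpos] at hn
    linarith
  rw [this] at hp
  exact ⟨p, hp⟩

lemma psol_unique (h0 : 0 < r₀) {s : ℝ} (hs : r₀ ≤ s)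
    (hW₀ : dot3 W₀ W₀ = 1) (hV₀ : dot3 W₀ V₀ = 0)
    {p q : ℝ → E3 × E3}
    (hp : PSol k b c μ r₀ (W₀, V₀) s p) (hq : PSol k b c μ r₀ (W₀, V₀) s q) :
    EqOn p q (Icc r₀ s) := by
  classical
  obtain ⟨K, C, hC, hlip, hbound⟩ := exists_K_C k b c μ r₀ s (rho k b μ r₀ W₀ V₀) h0
  set vf : ℝ → (E3 × E3) → (E3 × E3) :=
    fun t => if t ∈ Icc r₀ s then pvec k b c μ t else (fun _ => 0) with hvf
  have hv : ∀ t, LipschitzOnWith K (vf t)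
      (closedBall (0 : E3 × E3) (rho k b μ r₀ W₀ V₀)) := by
    intro t
    simp only [hvf]
    by_cases ht : t ∈ Icc r₀ s
    · rw [if_pos ht]; exact hlip t ht
    · rw [if_neg ht]
      intro x _ y _
      simp [edist_self]
  have hderp : ∀ t ∈ Ico r₀ s, HasDerivWithinAt p (vf t (p t)) (Ici t) t := by
    intro t ht
    have ht' : t ∈ Icc r₀ s := ⟨ht.1, le_of_lt ht.2⟩
    have h := (hp.2 t ht').mono (Icc_subset_Icc ht.1 le_rfl)
    have h' := h.mono_of_mem_nhdsWithin (Icc_mem_nhdsGE_of_mem ⟨le_refl t, ht.2⟩)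
    simp only [hvf]
    rw [if_pos ht']
    exact h'
  have hderq : ∀ t ∈ Ico r₀ s, HasDerivWithinAt q (vf t (q t)) (Ici t) t := by
    intro t ht
    have ht' : t ∈ Icc r₀ s := ⟨ht.1, le_of_lt ht.2⟩
    have h := (hq.2 t ht').mono (Icc_subset_Icc ht.1 le_rfl)
    have h' := h.mono_of_mem_nhdsWithin (Icc_mem_nhdsGE_of_mem ⟨le_refl t, ht.2⟩)
    simp only [hvf]
    rw [if_pos ht']
    exact h'
  have hmemp : ∀ t ∈ Ico r₀ s, p t ∈ closedBall (0 : E3 × E3) (rho k b μ r₀ W₀ V₀) := by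
    intro t ht
    rw [mem_closedBall_zero_iff]
    exact psol_norm_le h0 hs hW₀ hV₀ hp t ⟨ht.1, le_of_lt ht.2⟩
  have hmemq : ∀ t ∈ Ico r₀ s, q t ∈ closedBall (0 : E3 × E3) (rho k b μ r₀ W₀ V₀) := by
    intro t ht
    rw [mem_closedBall_zero_iff]
    exact psol_norm_le h0 hs hW₀ hV₀ hq t ⟨ht.1, le_of_lt ht.2⟩
  exact ODE_solution_unique_of_mem_Icc_right (fun t _ => hv t)
    (psol_cont hp) hderp hmemp (psol_cont hq) hderq hmemq (by rw [hp.1, hq.1])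

end step

/-! chunk 6 : the global solution -/

set_option maxHeartbeats 2000000 in
lemma part1 (k b c μ r₀ : ℝ) (h0 : 0 < r₀) (W₀ V₀ : E3)
    (hW₀ : dot3 W₀ W₀ = 1) (hV₀ : dot3 W₀ V₀ = 0) :
    ∃ W : ℝ → E3,
      (∀ r ∈ Ici r₀, (DifferentiableAt ℝ W r ∧ DifferentiableAt ℝ (deriv W) r)
        ∧ dot3 (W r) (W r) = 1
        ∧ deriv (deriv W) r = (pvec k b c μ r (W r, deriv W r)).2)
      ∧ W r₀ = W₀ ∧ deriv W r₀ = V₀ := by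
  classical
  have hex : ∀ n : ℕ, ∃ p, PSol k b c μ r₀ (W₀, V₀) (r₀ + n + 1) p := fun n =>
    psol_exists h0 hW₀ hV₀ (r₀ + n + 1) (by
      have : (0:ℝ) ≤ n := Nat.cast_nonneg n
      linarith)
  choose ps hps using hex
  have hdom : ∀ n : ℕ, r₀ ≤ r₀ + n + 1 := fun n => by
    have : (0:ℝ) ≤ n := Nat.cast_nonneg n
    linarith
  have hagree : ∀ (m n : ℕ) (r : ℝ), r₀ ≤ r → r ≤ r₀ + m + 1 → r ≤ r₀ + n + 1 →
      ps m r = ps n r := by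
    intro m n r h1 h2 h3
    set T : ℝ := min (r₀ + m + 1) (r₀ + n + 1) with hT
    have hTr : r₀ ≤ T := le_min (hdom m) (hdom n)
    have h := psol_unique h0 hTr hW₀ hV₀
      (psol_mono (min_le_left _ _) hTr (hps m))
      (psol_mono (min_le_right _ _) hTr (hps n))
    exact h ⟨h1, le_min h2 h3⟩
  set N : ℝ → ℕ := fun r => ⌈r - r₀⌉₊ with hN
  have hNle : ∀ r : ℝ, r ≤ r₀ + N r := by
    intro r
    have := Nat.le_ceil (r - r₀)
    simp only [hN]
    linarith [this]
  set A₀ : E3 := (pvec k b c μ r₀ (W₀, V₀)).2 with hA₀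
  set tay : ℝ → E3 × E3 := fun r =>
    (W₀ + (r - r₀) • V₀ + ((r - r₀)^2/2) • A₀, V₀ + (r - r₀) • A₀) with htay
  set Wgl : ℝ → E3 × E3 := fun r => if r ≤ r₀ then tay r else ps (N r) r with hWgl
  have hWglr₀ : Wgl r₀ = (W₀, V₀) := by
    simp only [hWgl, if_pos le_rfl, htay]
    simp
  have hloc : ∀ (n : ℕ) (r : ℝ), r₀ ≤ r → r ≤ r₀ + n + 1 → Wgl r = ps n r := by
    intro n r h1 h2
    by_cases hr : r ≤ r₀
    · have hrr : r = r₀ := le_antisymm hr h1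
      subst hrr
      rw [hWglr₀, (hps n).1]
    · push_neg at hr
      simp only [hWgl, if_neg (not_le.2 hr)]
      exact hagree (N r) n r h1 (by linarith [hNle r]) h2
  set W : ℝ → E3 := fun r => (Wgl r).1 with hWdef
  set g : ℝ → E3 := fun r => (Wgl r).2 with hgdef
  -- basic derivative facts for tay
  have htay1 : ∀ r : ℝ, HasDerivAt (fun u => (tay u).1) ((tay r).2) r := by
    intro r
    have h1 : HasDerivAt (fun u : ℝ => u - r₀) 1 r := (hasDerivAt_id r).sub_const r₀
    have h2 : HasDerivAt (fun u : ℝ => (u - r₀) • V₀) ((1:ℝ) • V₀) r := h1.smul_const V₀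
    have h3 : HasDerivAt (fun u : ℝ => (u - r₀)^2/2) ((r - r₀)) r := by
      have := ((h1.fun_pow 2).div_const 2)
      refine this.congr_deriv (Eq.symm ?_)
      push_cast
      ring
    have h4 : HasDerivAt (fun u : ℝ => ((u - r₀)^2/2) • A₀) ((r - r₀) • A₀) r :=
      h3.smul_const A₀
    have := ((h2.const_add W₀).add h4)
    simp only [htay]
    refine this.congr_deriv (Eq.symm ?_)
    simp [one_smul]
  have htay2 : ∀ r : ℝ, HasDerivAt (fun u => (tay u).2) A₀ r := by
    intro r
    have h1 : HasDerivAt (fun u : ℝ => u - r₀) 1 r := (hasDerivAt_id r).sub_const r₀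
    have h2 : HasDerivAt (fun u : ℝ => (u - r₀) • A₀) ((1:ℝ) • A₀) r := h1.smul_const A₀
    have := h2.const_add V₀
    simp only [htay]
    refine this.congr_deriv (Eq.symm ?_)
    simp [one_smul]
  -- W agrees with tay.1 on Iic r₀
  have hWtay : ∀ r ≤ r₀, W r = (tay r).1 := by
    intro r hr
    simp only [hWdef, hWgl, if_pos hr]
  have hgtay : ∀ r ≤ r₀, g r = (tay r).2 := by
    intro r hr
    simp only [hgdef, hWgl, if_pos hr]
  -- interior facts, r > r₀ : Wgl is locally a fixed solution
  have hlocal : ∀ r : ℝ, r₀ < r → HasDerivAt Wgl (pvec k b c μ r (Wgl r)) r := by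
    intro r hr
    set n := N r with hn
    have hrlt : r < r₀ + n + 1 := by
      have := hNle r
      simp only [hn]
      linarith
    have hev : Wgl =ᶠ[𝓝 r] ps n := by
      have hU : Ioo r₀ (r₀ + n + 1) ∈ 𝓝 r := Ioo_mem_nhds hr hrlt
      filter_upwards [hU] with u hu
      exact hloc n u (le_of_lt hu.1) (le_of_lt hu.2)
    have hps' : HasDerivAt (ps n) (pvec k b c μ r (ps n r)) r :=
      ((hps n).2 r ⟨le_of_lt hr, le_of_lt hrlt⟩).hasDerivAt (Icc_mem_nhds hr hrlt)
    have := hps'.congr_of_eventuallyEq hev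
    rwa [← hev.eq_of_nhds] at this
  -- derivative of W for r > r₀
  have hWderiv : ∀ r : ℝ, r₀ < r → HasDerivAt W (g r) r := by
    intro r hr
    have h1 := hda_fst (hlocal r hr)
    have hP1 : (pvec k b c μ r (Wgl r)).1 = (Wgl r).2 := by rw [pvec_eq]
    rw [hP1] at h1
    simp only [hWdef, hgdef]
    exact h1
  have hglocal : ∀ r : ℝ, r₀ < r → HasDerivAt g ((pvec k b c μ r (Wgl r)).2) r := by
    intro r hr
    have h1 := hda_snd (hlocal r hr)
    simp only [hgdef]
    exact h1
  -- derivative of W at r₀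
  have hmem0 : r₀ ∈ Icc r₀ (r₀ + ((0:ℕ):ℝ) + 1) := ⟨le_rfl, hdom 0⟩
  have hIccnh : Icc r₀ (r₀ + ((0:ℕ):ℝ) + 1) ∈ 𝓝[Ici r₀] r₀ :=
    Icc_mem_nhdsGE_of_mem ⟨le_rfl, by push_cast; linarith⟩
  have hps0 := (hps 0).2 r₀ hmem0
  rw [(hps 0).1] at hps0
  have hWps0 : ∀ u ∈ Icc r₀ (r₀ + ((0:ℕ):ℝ) + 1), W u = (ps 0 u).1 := by
    intro u hu
    simp only [hWdef]
    rw [hloc 0 u hu.1 hu.2]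
  have hgps0 : ∀ u ∈ Icc r₀ (r₀ + ((0:ℕ):ℝ) + 1), g u = (ps 0 u).2 := by
    intro u hu
    simp only [hgdef]
    rw [hloc 0 u hu.1 hu.2]
  have hright1 : HasDerivWithinAt W V₀ (Ici r₀) r₀ := by
    have h1 := hdw_fst hps0
    have hP1 : (pvec k b c μ r₀ (W₀, V₀)).1 = V₀ := by rw [pvec_eq]
    rw [hP1] at h1
    have h2 := h1.congr hWps0 (hWps0 r₀ hmem0)
    exact h2.mono_of_mem_nhdsWithin hIccnh
  have htayr₀1 : (tay r₀).2 = V₀ := by simp [htay]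
  have hleft1 : HasDerivWithinAt W V₀ (Iic r₀) r₀ := by
    have := (htay1 r₀).hasDerivWithinAt (s := Iic r₀)
    rw [htayr₀1] at this
    exact this.congr (fun u hu => hWtay u hu) (hWtay r₀ le_rfl)
  have hWr₀ : HasDerivAt W V₀ r₀ := by
    have h1 := hleft1.union hright1
    rw [Iic_union_Ici] at h1
    exact h1.hasDerivAt univ_mem
  -- deriv W = g globally
  have hgr₀val : g r₀ = V₀ := by rw [hgdef]; simp only; rw [hWglr₀]
  have hderivW : ∀ u, deriv W u = g u := by
    intro u
    rcases lt_trichotomy u r₀ with h | h | h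
    · have hev : (fun t => (tay t).1) =ᶠ[𝓝 u] W := by
        filter_upwards [Iio_mem_nhds h] with t ht
        exact (hWtay t (le_of_lt ht)).symm
      have := (htay1 u).congr_of_eventuallyEq hev.symm
      rw [this.deriv, hgtay u (le_of_lt h)]
    · subst h
      rw [hWr₀.deriv, hgr₀val]
    · rw [(hWderiv u h).deriv]
  have hderivWfun : deriv W = g := funext hderivW
  -- second derivative at r₀
  have hgright : HasDerivWithinAt g A₀ (Ici r₀) r₀ := by
    have h1 := hdw_snd hps0
    have h2 := h1.congr hgps0 (hgps0 r₀ hmem0)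
    exact h2.mono_of_mem_nhdsWithin hIccnh
  have hgleft : HasDerivWithinAt g A₀ (Iic r₀) r₀ := by
    have := (htay2 r₀).hasDerivWithinAt (s := Iic r₀)
    exact this.congr (fun u hu => hgtay u hu) (hgtay r₀ le_rfl)
  have hgr₀ : HasDerivAt g A₀ r₀ := by
    have h1 := hgleft.union hgright
    rw [Iic_union_Ici] at h1
    exact h1.hasDerivAt univ_mem
  have hWr₀val : W r₀ = W₀ := by rw [hWdef]; simp only; rw [hWglr₀]
  refine ⟨W, ?_, hWr₀val, hWr₀.deriv⟩
  intro r hr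
  rcases eq_or_lt_of_le (show r₀ ≤ r from hr) with h | h
  · subst h
    refine ⟨⟨hWr₀.differentiableAt, ?_⟩, ?_, ?_⟩
    · rw [hderivWfun]; exact hgr₀.differentiableAt
    · rw [hWr₀val]; exact hW₀
    · rw [hderivWfun, hgr₀.deriv, hWr₀val, hgr₀val]
  · have hsph := (psol_sphere h0 (hdom (N r)) hW₀ hV₀ (hps (N r)) r
      ⟨le_of_lt h, by linarith [hNle r]⟩).1
    have hWr : W r = (ps (N r) r).1 := by
      simp only [hWdef]
      rw [hloc (N r) r (le_of_lt h) (by linarith [hNle r])]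
    refine ⟨⟨(hWderiv r h).differentiableAt, ?_⟩, ?_, ?_⟩
    · rw [hderivWfun]; exact (hglocal r h).differentiableAt
    · rw [hWr]; exact hsph
    · rw [hderivWfun, (hglocal r h).deriv]

lemma dot3_comm (v w : Fin 3 → ℝ) : dot3 v w = dot3 w v := by simp [dot3]; ring
lemma dot3_zero (v : Fin 3 → ℝ) : dot3 v 0 = 0 := by simp [dot3]
lemma dot3_add (u v w : Fin 3 → ℝ) : dot3 u (v + w) = dot3 u v + dot3 u w := by
  simp [dot3]; ring
lemma dot3_sub (u v w : Fin 3 → ℝ) : dot3 u (v - w) = dot3 u v - dot3 u w := by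
  simp [dot3]; ring
lemma dot3_smul (a : ℝ) (u v : Fin 3 → ℝ) : dot3 u (a • v) = a * dot3 u v := by
  simp [dot3]; ring
lemma dot3_cross_self (v w : Fin 3 → ℝ) : dot3 w (cross3 v w) = 0 := by
  simp [dot3, cross3]; ring
lemma dot3_self_nonneg (v : Fin 3 → ℝ) : 0 ≤ dot3 v v := by
  have := sq_nonneg (v 0); have := sq_nonneg (v 1); have := sq_nonneg (v 2)
  simp only [dot3]; nlinarith


section profile
variable {k b c μ r₀ : ℝ} {W : ℝ → Fin 3 → ℝ}

lemma sphere_orth (hW : IsSimProfile k b c μ (Ici r₀) W) :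
    ∀ r ∈ Ici r₀, dot3 (W r) (deriv W r) = 0 := by
  intro r hr
  have hd : HasDerivAt W (deriv W r) r := (hW.2.1 r hr).1.hasDerivAt
  have hu : HasDerivAt (fun t => dot3 (W t) (W t))
      (dot3 (deriv W r) (W r) + dot3 (W r) (deriv W r)) r := hasDerivAt_dot3 hd hd
  have hu0 : HasDerivWithinAt (fun t => dot3 (W t) (W t)) 0 (Ici r₀) r := by
    exact (hasDerivWithinAt_const r (Ici r₀) (1:ℝ)).congr
      (fun y hy => (hW.2.2.1 y hy)) (hW.2.2.1 r hr)
  have := (uniqueDiffOn_Ici r₀ r hr).eq_deriv _ hu.hasDerivWithinAt hu0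
  rw [dot3_comm (deriv W r) (W r)] at this
  linarith [this]

lemma phi_mem (hW : IsSimProfile k b c μ (Ici r₀) W) :
    ∀ r ∈ Ici r₀, W r 0 ∈ Icc (-1:ℝ) 1 := by
  intro r hr
  have h1 := hW.2.2.1 r hr
  simp only [dot3] at h1
  constructor <;> nlinarith [sq_nonneg (W r 1), sq_nonneg (W r 2), sq_nonneg (W r 0 + 1), sq_nonneg (W r 0 - 1)]

/-- the key scalar identity obtained by dotting the ODE with `W'`. -/
lemma dot_vA (hW : IsSimProfile k b c μ (Ici r₀) W) :
    ∀ r ∈ Ici r₀, dot3 (deriv W r) (deriv (deriv W) r)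
      = -((1/r) * dot3 (deriv W r) (deriv W r)
          + (gder k b (W r 0) / r^2 + μ) * (deriv W r 0)) := by
  intro r hr
  have heq := hW.2.2.2 r hr
  have horth : dot3 (deriv W r) (W r) = 0 := by
    rw [dot3_comm]; exact sphere_orth hW r hr
  have h := congrArg (dot3 (deriv W r)) heq
  rw [dot3_zero] at h
  simp only [dot3_add, dot3_sub, dot3_smul, dot3_cross_self, dot3_e0, deriv_gfun,
    horth, mul_zero, sub_zero, add_zero, zero_add] at h
  have hh : dot3 (deriv W r) (deriv (deriv W) r)
      + (1/r) * dot3 (deriv W r) (deriv W r)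
      + (gder k b (W r 0) / r^2) * (deriv W r 0) + μ * (deriv W r 0) = 0 := by
    linarith [h]
  linarith [hh]

end profile


noncomputable def en (k b μ : ℝ) (W : ℝ → Fin 3 → ℝ) (r : ℝ) : ℝ :=
  1/2 * dot3 (deriv W r) (deriv W r) + (gfun k b (W r 0) + Cg k b) * (r^2)⁻¹ + μ * (W r 0)

noncomputable def ende (k b μ : ℝ) (W : ℝ → Fin 3 → ℝ) (r : ℝ) : ℝ :=
  -(dot3 (deriv W r) (deriv W r) / r) - 2*(gfun k b (W r 0) + Cg k b) * (r^3)⁻¹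

section profile2
variable {k b c μ r₀ : ℝ} {W : ℝ → Fin 3 → ℝ}

lemma hasDerivAt_en (hW : IsSimProfile k b c μ (Ici r₀) W) (h0 : 0 < r₀) :
    ∀ r ∈ Ici r₀, HasDerivAt (en k b μ W) (ende k b μ W r) r := by
  intro r hr
  have hrpos : 0 < r := lt_of_lt_of_le h0 hr
  have hr0 : r ≠ 0 := ne_of_gt hrpos
  have HW : HasDerivAt W (deriv W r) r := (hW.2.1 r hr).1.hasDerivAt
  have Hv : HasDerivAt (deriv W) (deriv (deriv W) r) r := (hW.2.1 r hr).2.hasDerivAt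
  have Hq : HasDerivAt (fun t => dot3 (deriv W t) (deriv W t))
      (dot3 (deriv (deriv W) r) (deriv W r) + dot3 (deriv W r) (deriv (deriv W) r)) r :=
    hasDerivAt_dot3 Hv Hv
  have Hφ : HasDerivAt (fun t => W t 0) (deriv W r 0) r := hasDerivAt_pi.1 HW 0
  have Hg : HasDerivAt (fun t => gfun k b (W t 0)) (gder k b (W r 0) * deriv W r 0) r :=
    by have := (hasDerivAt_gfun k b (W r 0)).comp r Hφ; exact this
  have Hinv : HasDerivAt (fun t : ℝ => (t^2)⁻¹)
      (-(↑2 * r^(2-1)) / (r^2)^2) r := (hasDerivAt_pow 2 r).inv (pow_ne_zero 2 hr0)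
  have Total := ((Hq.const_mul (1/2:ℝ)).add ((Hg.add_const (Cg k b)).mul Hinv)).add
    (Hφ.const_mul μ)
  have funeq : en k b μ W = fun t => 1/2 * dot3 (deriv W t) (deriv W t)
      + (gfun k b (W t 0) + Cg k b) * ((t^2)⁻¹) + μ * (W t 0) := by
    funext t; rfl
  rw [funeq]
  refine Total.congr_deriv (Eq.symm ?_)
  rw [dot3_comm (deriv (deriv W) r) (deriv W r), dot_vA hW r hr]
  unfold ende
  field_simp
  ring

lemma ende_nonpos (hW : IsSimProfile k b c μ (Ici r₀) W) (h0 : 0 < r₀) :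
    ∀ r ∈ Ici r₀, ende k b μ W r ≤ 0 := by
  intro r hr
  have hrpos : 0 < r := lt_of_lt_of_le h0 hr
  have hq : 0 ≤ dot3 (deriv W r) (deriv W r) := dot3_self_nonneg _
  have hg : 0 ≤ gfun k b (W r 0) + Cg k b := by
    have := neg_le_of_abs_le (gfun_bound k b (phi_mem hW r hr))
    linarith
  have t1 : 0 ≤ dot3 (deriv W r) (deriv W r) / r := div_nonneg hq hrpos.le
  have t2 : 0 ≤ 2*(gfun k b (W r 0) + Cg k b) * (r^3)⁻¹ := by positivity
  unfold ende; linarith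

lemma en_lb (hW : IsSimProfile k b c μ (Ici r₀) W) (h0 : 0 < r₀) :
    ∀ r ∈ Ici r₀, -|μ| ≤ en k b μ W r := by
  intro r hr
  have hrpos : 0 < r := lt_of_lt_of_le h0 hr
  have hq : 0 ≤ dot3 (deriv W r) (deriv W r) := dot3_self_nonneg _
  have hg : 0 ≤ gfun k b (W r 0) + Cg k b := by
    have := neg_le_of_abs_le (gfun_bound k b (phi_mem hW r hr))
    linarith
  have h2 : 0 ≤ (gfun k b (W r 0) + Cg k b) * (r^2)⁻¹ := by positivity
  have h3 : -|μ| ≤ μ * (W r 0) := by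
    have h4 : |μ * W r 0| ≤ |μ| := by
      rw [abs_mul]
      have := phi_mem hW r hr
      have h5 : |W r 0| ≤ 1 := abs_le.2 ⟨this.1, this.2⟩
      nlinarith [abs_nonneg μ]
    linarith [neg_abs_le (μ * W r 0)]
  unfold en; linarith

lemma en_anti (hW : IsSimProfile k b c μ (Ici r₀) W) (h0 : 0 < r₀) :
    AntitoneOn (en k b μ W) (Ici r₀) := by
  apply antitoneOn_of_deriv_nonpos (convex_Ici r₀)
  · exact fun r hr => (hasDerivAt_en hW h0 r hr).continuousAt.continuousWithinAt
  · rw [interior_Ici]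
    exact fun r hr => (hasDerivAt_en hW h0 r (mem_Ici.2 (le_of_lt hr))).differentiableAt.differentiableWithinAt
  · rw [interior_Ici]
    intro r hr
    rw [(hasDerivAt_en hW h0 r (mem_Ici.2 (le_of_lt hr))).deriv]
    exact ende_nonpos hW h0 r (mem_Ici.2 (le_of_lt hr))

lemma en_tendsto (hW : IsSimProfile k b c μ (Ici r₀) W) (h0 : 0 < r₀) :
    ∃ l, Tendsto (en k b μ W) atTop (𝓝 l) := by
  set h2 : ℝ → ℝ := fun r => en k b μ W (max r r₀) with hh2
  have h2anti : Antitone h2 := by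
    intro x y hxy
    exact en_anti hW h0 (le_max_right x r₀) (le_max_right y r₀)
      (max_le_max hxy le_rfl)
  have hbdd : BddBelow (range h2) := by
    refine ⟨-|μ|, ?_⟩
    rintro z ⟨r, rfl⟩
    exact en_lb hW h0 _ (le_max_right r r₀)
  refine ⟨⨅ r, h2 r, Tendsto.congr' ?_ (tendsto_atTop_ciInf h2anti hbdd)⟩
  filter_upwards [eventually_ge_atTop r₀] with r hr
  rw [hh2]
  simp only [max_eq_left hr]

end profile2


section profile3
variable {k b c μ r₀ : ℝ} {W : ℝ → Fin 3 → ℝ}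

set_option maxHeartbeats 2000000 in
lemma part2 (hW : IsSimProfile k b c μ (Ici r₀) W) (h0 : 0 < r₀) :
    (∃ L : ℝ, Tendsto
        (fun r => 1 / 2 * dot3 (deriv W r) (deriv W r) - μ * (1 - dot3 (W r) e0))
        atTop (𝓝 L)) ∧
      MeasureTheory.IntegrableOn (fun r => dot3 (deriv W r) (deriv W r) / r) (Ici r₀) := by
  obtain ⟨l, hl⟩ := en_tendsto hW h0
  have hCg := Cg_nonneg k b
  -- the fraction tends to 0
  have hinv2 : Tendsto (fun r : ℝ => (r^2)⁻¹) atTop (𝓝 0) :=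
    (tendsto_pow_atTop (by norm_num : (2:ℕ) ≠ 0)).inv_tendsto_atTop
  have hfrac : Tendsto (fun r => (gfun k b (W r 0) + Cg k b) * (r^2)⁻¹) atTop (𝓝 0) := by
    apply squeeze_zero' (g := fun r => 2 * Cg k b * (r^2)⁻¹)
    · filter_upwards [eventually_ge_atTop r₀] with r hr
      have hrpos : 0 < r := lt_of_lt_of_le h0 hr
      have hg : 0 ≤ gfun k b (W r 0) + Cg k b := by
        have := neg_le_of_abs_le (gfun_bound k b (phi_mem hW r hr))
        linarith
      positivity
    · filter_upwards [eventually_ge_atTop r₀] with r hr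
      have hrpos : 0 < r := lt_of_lt_of_le h0 hr
      have hg : gfun k b (W r 0) ≤ Cg k b := le_of_abs_le (gfun_bound k b (phi_mem hW r hr))
      have hpos : (0:ℝ) ≤ (r^2)⁻¹ := by positivity
      have : gfun k b (W r 0) + Cg k b ≤ 2 * Cg k b := by linarith
      nlinarith
    · simpa using hinv2.const_mul (2 * Cg k b)
  constructor
  · refine ⟨l - 0 - μ, Tendsto.congr (fun r => ?_) ((hl.sub hfrac).sub_const μ)⟩
    unfold en
    rw [dot3_e0]
    ring
  · -- integrability
    have hInt1 : MeasureTheory.IntegrableOn (ende k b μ W) (Ioi r₀) :=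
      MeasureTheory.integrableOn_Ioi_deriv_of_nonpos' (hasDerivAt_en hW h0)
        (fun x hx => ende_nonpos hW h0 x (mem_Ici.2 (le_of_lt hx))) hl
    have hdom : MeasureTheory.IntegrableOn (fun r : ℝ => (4*Cg k b) * (r^3)⁻¹) (Ioi r₀) := by
      have hC := Cg_nonneg k b
      have key : ∀ x ∈ Ici r₀,
          HasDerivAt (fun r : ℝ => -(2*Cg k b) * (r^2)⁻¹) ((4*Cg k b) * (x^3)⁻¹) x := by
        intro x hx
        have hx0 : x ≠ 0 := ne_of_gt (h0.trans_le hx)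
        have h := ((hasDerivAt_pow 2 x).inv (pow_ne_zero 2 hx0)).const_mul (-(2*Cg k b))
        have e : -(2*Cg k b) * (-(((2:ℕ):ℝ) * x ^ (2-1)) / (x^2)^2) = 4*Cg k b * (x^3)⁻¹ := by
          push_cast
          field_simp
          ring
        rw [e] at h
        exact h
      have hnn : ∀ x ∈ Ioi r₀, 0 ≤ (4*Cg k b) * (x^3)⁻¹ := by
        intro x hx
        have hxpos : 0 < x := h0.trans (mem_Ioi.mp hx)
        positivity
      have htd : Tendsto (fun r : ℝ => -(2*Cg k b) * (r^2)⁻¹) atTop (𝓝 0) := by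
        have := (hinv2.const_mul (-(2*Cg k b)))
        simpa using this
      exact MeasureTheory.integrableOn_Ioi_deriv_of_nonneg' key hnn htd
    have hgc : Continuous (gfun k b) := by unfold gfun; fun_prop
    have hφ : ContinuousOn (fun r => W r 0) (Ioi r₀) := fun r hr =>
      ((continuous_apply (0 : Fin 3)).continuousAt.comp
        (hW.2.1 r (mem_Ici.2 (le_of_lt hr))).1.continuousAt).continuousWithinAt
    have hG2cont : ContinuousOn
        (fun r => 2*(gfun k b (W r 0) + Cg k b) * (r^3)⁻¹) (Ioi r₀) := by
      apply ContinuousOn.mul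
      · exact continuousOn_const.mul ((hgc.comp_continuousOn hφ).add continuousOn_const)
      · exact ContinuousOn.inv₀ (continuousOn_pow 3)
          (fun x hx => pow_ne_zero 3 (ne_of_gt (h0.trans hx)))
    have hG2 : MeasureTheory.IntegrableOn
        (fun r => 2*(gfun k b (W r 0) + Cg k b) * (r^3)⁻¹) (Ioi r₀) := by
      apply hdom.mono' (hG2cont.aestronglyMeasurable measurableSet_Ioi)
      rw [MeasureTheory.ae_restrict_iff' measurableSet_Ioi]
      filter_upwards with x
      intro hx
      have hxpos : 0 < x := h0.trans hx
      have hg1 : gfun k b (W x 0) ≤ Cg k b :=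
        le_of_abs_le (gfun_bound k b (phi_mem hW x (mem_Ici.2 (le_of_lt hx))))
      have hg2 : -Cg k b ≤ gfun k b (W x 0) :=
        neg_le_of_abs_le (gfun_bound k b (phi_mem hW x (mem_Ici.2 (le_of_lt hx))))
      have hnn : 0 ≤ 2*(gfun k b (W x 0) + Cg k b) * (x^3)⁻¹ := by
        have : 0 ≤ gfun k b (W x 0) + Cg k b := by linarith
        positivity
      rw [Real.norm_eq_abs, abs_of_nonneg hnn]
      have hinv : (0:ℝ) ≤ (x^3)⁻¹ := by positivity
      nlinarith
    have hIoi : MeasureTheory.IntegrableOn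
        (fun r => dot3 (deriv W r) (deriv W r) / r) (Ioi r₀) := by
      apply MeasureTheory.IntegrableOn.congr_fun (hInt1.neg.sub hG2) _ measurableSet_Ioi
      intro x hx
      simp only [Pi.neg_apply, Pi.sub_apply]
      unfold ende
      ring
    rwa [integrableOn_Ici_iff_integrableOn_Ioi]

end profile3

/-- Sphere case, `c² < −4(bk + k²)`: similarity spherical profiles with prescribed
tangential data at `r₀` exist globally on `[r₀,∞)`; and every similarity spherical
profile on `[r₀,∞)` has convergent energy `(1/2)|W′|² − μ(1 − W·e₀)` and finite
`∫_{r₀}^∞ |W′|²/r dr`. -/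
theorem stmt14 (k b c μ : ℝ) (hb : c ^ 2 < -4 * (b * k + k ^ 2))
    (r₀ : ℝ) (hr₀ : 0 < r₀) :
    (∀ W₀ V₀ : Fin 3 → ℝ, dot3 W₀ W₀ = 1 → dot3 W₀ V₀ = 0 →
      ∃ W : ℝ → Fin 3 → ℝ,
        IsSimProfile k b c μ (Ici r₀) W ∧ W r₀ = W₀ ∧ deriv W r₀ = V₀) ∧
    (∀ W : ℝ → Fin 3 → ℝ, IsSimProfile k b c μ (Ici r₀) W →
      (∃ L : ℝ, Tendsto
        (fun r => 1 / 2 * dot3 (deriv W r) (deriv W r) - μ * (1 - dot3 (W r) e0))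
        atTop (nhds L)) ∧
      MeasureTheory.IntegrableOn (fun r => dot3 (deriv W r) (deriv W r) / r) (Ici r₀)) := by
  constructor
  · intro W₀ V₀ hW₀ hV₀
    obtain ⟨W, hmain, h1, h2⟩ := part1 k b c μ r₀ hr₀ W₀ V₀ hW₀ hV₀
    refine ⟨W, ⟨?_, fun r hrr => (hmain r hrr).1, fun r hrr => (hmain r hrr).2.1, ?_⟩, h1, h2⟩
    · intro r hrr
      exact lt_of_lt_of_le hr₀ hrr
    · intro r hrr
      have hODE := (hmain r hrr).2.2
      rw [hODE]
      have hred : (pvec k b c μ r (W r, deriv W r)).2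
          = -(dot3 (deriv W r) (deriv W r) • W r + (1 / r) • deriv W r
            + (deriv (gfun k b) (dot3 (W r) e0) / r ^ 2) • (e0 - dot3 (W r) e0 • W r)
            + μ • (e0 - dot3 (W r) e0 • W r)
            + (c / r - r / 2) • cross3 (W r) (deriv W r)) := rfl
      rw [hred]
      abel
  · intro W hW
    exact part2 hW hr₀
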